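/- Let k be a field, A = k[a_1,a_2], p ≥ 5 an odd integer, x_1 = a_1^p, x_2 = a_2^p, y = a_1^2 a_2^{p-2}. Let φ : A[X_1,X_2,Y] → A[t] be the A-algebra map sending X_1 ↦ x_1 t, X_2 ↦ x_2 t, Y ↦ y t. Then ker φ is the ideal of A[X_1,X_2,Y] generated by: F_1 = a_1^{p-2}Y − a_2^{p-2}X_1 and G_1 = a_2^2 Y − a_1^2 X_2 (degree 1); F_n = a_1^{p-2n}Y^n − a_2^{p-2n}X_1 X_2^{n-1} for 2 ≤ n ≤ (p-1)/2; F_{(p+1)/2} = a_2 Y^{(p+1)/2} − a_1 X_1 X_2^{(p-1)/2}; and F_p = Y^p − X_1^2 X_2^{p-2}. -/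

import Mathlib

/-!
Over `k`, `φ` is the monomial map `k[X₁, X₂, Y, a₁, a₂] → k[t, a₁, a₂]`, whose kernel is spanned
by the binomials between monomials of equal weight (degree in `t`, `a₁`, `a₂`). So it suffices
that the generators identify any two monomials of equal weight. If their `Y`-degrees differ, a
weight computation, using that `p` is odd, shows that the one of larger `Y`-degree is divisible by
the leading term of a generator, and rewriting lowers its `Y`-degree. Monomials of equal weight
and equal `Y`-degree differ by a power of `X₁a₂ᵖ − X₂a₁ᵖ = a₁ᵖ⁻²G₁ − a₂²F₁`.
-/

open MvPolynomial

namespace MvPolynomial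

variable {R σ τ : Type*} [CommRing R]

theorem aeval_monomial_one_monomial (w : σ → τ →₀ ℕ) (d : σ →₀ ℕ) (r : R) :
    aeval (fun i => monomial (w i) (1 : R)) (monomial d r) =
      monomial (Finsupp.linearCombination ℕ w d) r := by
  simp only [aeval_monomial, Finsupp.linearCombination_apply, monomial_finsupp_sum_index,
    monomial_pow, one_pow, algebraMap_eq]

theorem coeff_aeval_monomial_one [DecidableEq τ] (w : σ → τ →₀ ℕ) (f : MvPolynomial σ R)
    (q : τ →₀ ℕ) :
    coeff q (aeval (fun i => monomial (w i) (1 : R)) f) =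
      ∑ d ∈ f.support with Finsupp.linearCombination ℕ w d = q, coeff d f := by
  conv_lhs => rw [f.as_sum]
  simp only [map_sum, coeff_sum, aeval_monomial_one_monomial, coeff_monomial, Finset.sum_filter]

theorem ker_aeval_monomial_one (w : σ → τ →₀ ℕ) :
    RingHom.ker (aeval (fun i => monomial (w i) (1 : R))) =
      Ideal.span {f | ∃ d d', Finsupp.linearCombination ℕ w d =
        Finsupp.linearCombination ℕ w d' ∧ f = monomial d (1 : R) - monomial d' 1} := by
  classical
  set Φ := Finsupp.linearCombination ℕ w
  apply le_antisymm
  · intro f hf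
    rw [RingHom.mem_ker] at hf
    -- `s` picks one exponent in each fibre of `Φ`; the coefficients of `f` over the fibre of `q`
    -- sum to the coefficient of `X^q` in the image of `f`, which is zero
    set s := Function.invFun Φ
    have hs : ∀ d, Φ (s (Φ d)) = Φ d := fun d => Function.invFun_eq ⟨d, rfl⟩
    have hfib : ∑ d ∈ f.support, monomial (s (Φ d)) (coeff d f) = 0 := by
      rw [← Finset.sum_fiberwise_of_maps_to (t := f.support.image Φ)
        (fun d hd => Finset.mem_image_of_mem Φ hd)]
      refine Finset.sum_eq_zero fun q _ => ?_
      rw [Finset.sum_congr rfl fun d hd => by rw [(Finset.mem_filter.mp hd).2], ← map_sum,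
        ← coeff_aeval_monomial_one, hf, coeff_zero, map_zero]
    have hsplit : f = ∑ d ∈ f.support, C (coeff d f) * (monomial d 1 - monomial (s (Φ d)) 1) +
        ∑ d ∈ f.support, monomial (s (Φ d)) (coeff d f) := by
      simp only [mul_sub, C_mul_monomial, mul_one, Finset.sum_sub_distrib, sub_add_cancel]
      exact f.as_sum
    rw [hsplit, hfib, add_zero]
    exact Ideal.sum_mem _ fun d _ =>
      Ideal.mul_mem_left _ _ (Ideal.subset_span ⟨d, _, (hs d).symm, rfl⟩)
  · rw [Ideal.span_le]
    rintro _ ⟨d, d', h, rfl⟩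
    rw [SetLike.mem_coe, RingHom.mem_ker, map_sub, aeval_monomial_one_monomial,
      aeval_monomial_one_monomial, h, sub_self]

end MvPolynomial

section Arithmetic

variable {p m i j l α β i' j' l' α' β' : ℕ}

theorem add_eq_add_of_weight_eq (hp : 2 ≤ p) (ht : i + j + l = i' + j' + l')
    (ha : p * i + 2 * l + α = p * i' + 2 * l' + α')
    (hb : p * j + (p - 2) * l + β = p * j' + (p - 2) * l' + β') : α + β = α' + β' := by
  obtain ⟨q, rfl⟩ := Nat.exists_eq_add_of_le' hp
  rw [Nat.add_sub_cancel] at hb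
  have := congrArg ((q + 2) * ·) ht
  simp only [mul_add, add_mul] at *
  omega

/-- For monomials `x₁^i x₂^j y^l a^α b^β` of equal weight, the one of larger `y`-degree is divisible
by the leading term `y^n a^(p-2n)`, `y b²`, `y^(m+1) b` or `y^p` of a generator. -/
theorem reducible_of_weight_eq_of_lt (hpm : p = 2 * m + 1)
    (ha : p * i + 2 * l + α = p * i' + 2 * l' + α') (hab : α + β = α' + β') (hl : l < l') :
    (∃ n, 1 ≤ n ∧ n ≤ m ∧ n ≤ l' ∧ p - 2 * n ≤ α') ∨ (1 ≤ l' ∧ 2 ≤ β') ∨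
      (m + 1 ≤ l' ∧ 1 ≤ β') ∨ p ≤ l' := by
  by_contra! h
  obtain ⟨hF, hG, hM, hP⟩ := h
  have hi : i' < i := by
    by_contra! hi
    have := Nat.mul_le_mul_left p hi
    have := hG (by omega)
    omega
  -- now `p (s + 1) = 2 (l' - l) + α' - α`, which is `< p`, or `= 2 (l' - l) < 2p` with `p` odd
  obtain ⟨s, rfl⟩ := Nat.exists_eq_add_of_lt hi
  rw [show p * (i' + s + 1) = p * i' + p * s + p by ring] at ha
  rcases le_or_gt l' m with hlm | hml
  · have := hF l' (by omega) hlm le_rfl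
    omega
  · have := hF m (by omega) le_rfl hml.le
    have := hM hml
    rcases Nat.eq_zero_or_pos s with rfl | hs
    · omega
    · have := Nat.le_mul_of_pos_right p hs
      omega

end Arithmetic

section Equations

variable {R : Type*} [CommRing R] {p m : ℕ}

/-- The relations `Fₙ` (`1 ≤ n ≤ m`), `G₁`, `F_{m+1}`, `F_p` of the theorem, for `p = 2m + 1`,
between elements `x₁ x₂ y a b` standing for `X₁ X₂ Y a₁ a₂`. -/
structure ReesEquations (p m : ℕ) (x₁ x₂ y a b : R) : Prop where
  F : ∀ n, 1 ≤ n → n ≤ m → a ^ (p - 2 * n) * y ^ n = b ^ (p - 2 * n) * (x₁ * x₂ ^ (n - 1))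
  G : b ^ 2 * y = a ^ 2 * x₂
  Fmid : b * y ^ (m + 1) = a * (x₁ * x₂ ^ m)
  Fp : y ^ p = x₁ ^ 2 * x₂ ^ (p - 2)

theorem reesEquations_monomial (hpm : p = 2 * m + 1) (hm : 1 ≤ m) (u v T : R) :
    ReesEquations p m (u ^ p * T) (v ^ p * T) (u ^ 2 * v ^ (p - 2) * T) u v where
  F n hn hnm := by
    obtain ⟨n, rfl⟩ := Nat.exists_eq_add_of_le' hn
    obtain ⟨r, rfl⟩ : ∃ r, p = 2 * n + 2 + r := ⟨p - 2 * n - 2, by omega⟩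
    rw [show 2 * n + 2 + r - 2 * (n + 1) = r by omega, show 2 * n + 2 + r - 2 = 2 * n + r by omega,
      Nat.add_sub_cancel]
    ring
  G := by
    obtain ⟨q, rfl⟩ := Nat.exists_eq_add_of_le' (show 2 ≤ p by omega)
    rw [Nat.add_sub_cancel]
    ring
  Fmid := by
    obtain ⟨m, rfl⟩ := Nat.exists_eq_add_of_le' hm
    subst hpm
    rw [show 2 * (m + 1) + 1 - 2 = 2 * m + 1 by omega]
    ring
  Fp := by
    obtain ⟨q, rfl⟩ := Nat.exists_eq_add_of_le' (show 2 ≤ p by omega)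
    rw [Nat.add_sub_cancel]
    ring

theorem monomial_eq_of_mul_pow_eq_mul_pow {x₁ x₂ y a b : R} (hK : x₁ * b ^ p = x₂ * a ^ p)
    {i j α β i' j' α' β' : ℕ} (l : ℕ) (ht : i + j = i' + j') (ha : p * i + α = p * i' + α')
    (hab : α + β = α' + β') :
    x₁ ^ i * x₂ ^ j * y ^ l * a ^ α * b ^ β = x₁ ^ i' * x₂ ^ j' * y ^ l * a ^ α' * b ^ β' := by
  wlog hi : i ≤ i' generalizing i j α β i' j' α' β'
  · exact (this ht.symm ha.symm hab.symm (by omega)).symm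
  obtain ⟨d, rfl⟩ := Nat.exists_eq_add_of_le hi
  obtain rfl : j = j' + d := by omega
  obtain rfl : α = α' + p * d := by rw [mul_add] at ha; omega
  obtain rfl : β' = β + p * d := by omega
  calc _ = x₁ ^ i * x₂ ^ j' * y ^ l * a ^ α' * b ^ β * (x₂ * a ^ p) ^ d := by ring
    _ = _ := by rw [← hK]; ring

namespace ReesEquations

variable {x₁ x₂ y a b : R}

theorem mul_pow_eq_mul_pow (h : ReesEquations p m x₁ x₂ y a b) (hp : 2 ≤ p) (hm : 1 ≤ m) :
    x₁ * b ^ p = x₂ * a ^ p := by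
  have hF := h.F 1 le_rfl hm
  simp only [mul_one, pow_one] at hF
  obtain ⟨q, rfl⟩ := Nat.exists_eq_add_of_le' hp
  rw [Nat.add_sub_cancel] at hF
  linear_combination a ^ q * h.G - b ^ 2 * hF

theorem exists_lower_monomial_eq (h : ReesEquations p m x₁ x₂ y a b) (hpm : p = 2 * m + 1)
    (hm : 1 ≤ m) {i l α β i' j' l' α' β' : ℕ}
    (ha : p * i + 2 * l + α = p * i' + 2 * l' + α') (hab : α + β = α' + β') (hl : l < l') :
    ∃ i'' j'' l'' α'' β'', l'' < l' ∧ i'' + j'' + l'' = i' + j' + l' ∧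
      p * i'' + 2 * l'' + α'' = p * i' + 2 * l' + α' ∧ α'' + β'' = α' + β' ∧
      x₁ ^ i' * x₂ ^ j' * y ^ l' * a ^ α' * b ^ β' =
        x₁ ^ i'' * x₂ ^ j'' * y ^ l'' * a ^ α'' * b ^ β'' := by
  rcases reducible_of_weight_eq_of_lt hpm ha hab hl with
    ⟨n, hn1, hnm, hnl, hnα⟩ | ⟨hl1, hβ⟩ | ⟨hml, hβ⟩ | hpl
  · obtain ⟨l₀, rfl⟩ := Nat.exists_eq_add_of_le' hnl
    obtain ⟨α₀, rfl⟩ := Nat.exists_eq_add_of_le' hnα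
    refine ⟨i' + 1, j' + (n - 1), l₀, α₀, β' + (p - 2 * n), by omega, by omega,
      by rw [mul_add]; omega, by omega, ?_⟩
    calc _ = x₁ ^ i' * x₂ ^ j' * y ^ l₀ * a ^ α₀ * b ^ β' * (a ^ (p - 2 * n) * y ^ n) := by ring
      _ = _ := by rw [h.F n hn1 hnm]; ring
  · obtain ⟨l₀, rfl⟩ := Nat.exists_eq_add_of_le' hl1
    obtain ⟨β₀, rfl⟩ := Nat.exists_eq_add_of_le' hβ
    refine ⟨i', j' + 1, l₀, α' + 2, β₀, by omega, by omega, by omega, by omega, ?_⟩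
    calc _ = x₁ ^ i' * x₂ ^ j' * y ^ l₀ * a ^ α' * b ^ β₀ * (b ^ 2 * y) := by ring
      _ = _ := by rw [h.G]; ring
  · obtain ⟨l₀, rfl⟩ := Nat.exists_eq_add_of_le' hml
    obtain ⟨β₀, rfl⟩ := Nat.exists_eq_add_of_le' hβ
    refine ⟨i' + 1, j' + m, l₀, α' + 1, β₀, by omega, by omega,
      by rw [mul_add]; omega, by omega, ?_⟩
    calc _ = x₁ ^ i' * x₂ ^ j' * y ^ l₀ * a ^ α' * b ^ β₀ * (b * y ^ (m + 1)) := by ring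
      _ = _ := by rw [h.Fmid]; ring
  · obtain ⟨l₀, rfl⟩ := Nat.exists_eq_add_of_le' hpl
    refine ⟨i' + 2, j' + (p - 2), l₀, α', β', by omega, by omega,
      by rw [mul_add]; omega, rfl, ?_⟩
    calc _ = x₁ ^ i' * x₂ ^ j' * y ^ l₀ * a ^ α' * b ^ β' * y ^ p := by ring
      _ = _ := by rw [h.Fp]; ring

/-- The weights are `x₁ ↦ (1, p, 0)`, `x₂ ↦ (1, 0, p)`, `y ↦ (1, 2, p - 2)`, `a ↦ (0, 1, 0)`,
`b ↦ (0, 0, 1)`; equality of the last coordinate is replaced by `hab`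
(see `add_eq_add_of_weight_eq`). -/
theorem monomial_eq_of_weight_eq (h : ReesEquations p m x₁ x₂ y a b) (hpm : p = 2 * m + 1)
    (hm : 1 ≤ m) {i j l α β i' j' l' α' β' : ℕ}
    (ht : i + j + l = i' + j' + l') (ha : p * i + 2 * l + α = p * i' + 2 * l' + α')
    (hab : α + β = α' + β') :
    x₁ ^ i * x₂ ^ j * y ^ l * a ^ α * b ^ β = x₁ ^ i' * x₂ ^ j' * y ^ l' * a ^ α' * b ^ β' := by
  induction hN : l + l' using Nat.strong_induction_on
    generalizing i j l α β i' j' l' α' β' with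
  | _ N ih =>
  wlog hll : l ≤ l' generalizing i j l α β i' j' l' α' β'
  · refine (this ht.symm ha.symm hab.symm ?_ ?_).symm <;> omega
  rcases hll.eq_or_lt with rfl | hlt
  · exact monomial_eq_of_mul_pow_eq_mul_pow (h.mul_pow_eq_mul_pow (by omega) hm) l
      (by omega) (by omega) hab
  · obtain ⟨i'', j'', l'', α'', β'', hl'', ht'', ha'', hab'', heq⟩ :=
      h.exists_lower_monomial_eq hpm hm ha hab hlt
    rw [heq]
    exact ih (l + l'') (by omega) (by omega) (by omega) (by omega) rfl

end ReesEquations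

end Equations

section ReesMap

variable (k : Type*) [CommRing k] (p : ℕ) {m : ℕ}

noncomputable def reesMap :
    MvPolynomial (Fin 3) (MvPolynomial (Fin 2) k) →ₐ[MvPolynomial (Fin 2) k]
      Polynomial (MvPolynomial (Fin 2) k) :=
  aeval ![Polynomial.C (X 0 ^ p) * Polynomial.X, Polynomial.C (X 1 ^ p) * Polynomial.X,
    Polynomial.C (X 0 ^ 2 * X 1 ^ (p - 2)) * Polynomial.X]

def reesGenerators : Set (MvPolynomial (Fin 3) (MvPolynomial (Fin 2) k)) :=
  {C (X 0 ^ (p - 2)) * X 2 - C (X 1 ^ (p - 2)) * X 0,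
    C (X 1 ^ 2) * X 2 - C (X 0 ^ 2) * X 1,
    C (X 1) * X 2 ^ ((p + 1) / 2) - C (X 0) * (X 0 * X 1 ^ ((p - 1) / 2)),
    X 2 ^ p - X 0 ^ 2 * X 1 ^ (p - 2)} ∪
  (fun n => C (X 0 ^ (p - 2 * n)) * X 2 ^ n - C (X 1 ^ (p - 2 * n)) * (X 0 * X 1 ^ (n - 1))) ''
    Set.Icc 2 ((p - 1) / 2)

/-- Exponent vectors of the images of `X₁, X₂, Y` (`Sum.inl`) and `a₁, a₂` (`Sum.inr`) in
`k[t, a₁, a₂]`, where `none` stands for `t`. -/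
noncomputable def reesWeight : Fin 3 ⊕ Fin 2 → Option (Fin 2) →₀ ℕ :=
  Sum.elim ![.single none 1 + .single (some 0) p, .single none 1 + .single (some 1) p,
      .single none 1 + .single (some 0) 2 + .single (some 1) (p - 2)]
    fun j => .single (some j) 1

theorem reesMap_sumAlgEquiv (g : MvPolynomial (Fin 3 ⊕ Fin 2) k) :
    reesMap k p (sumAlgEquiv k (Fin 3) (Fin 2) g) =
      optionEquivLeft k (Fin 2) (aeval (fun i => monomial (reesWeight p i) (1 : k)) g) := by
  suffices ((reesMap k p).restrictScalars k).comp (sumAlgEquiv k (Fin 3) (Fin 2)).toAlgHom =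
      (optionEquivLeft k (Fin 2)).toAlgHom.comp (aeval fun i => monomial (reesWeight p i) 1) from
    DFunLike.congr_fun this g
  refine algHom_ext fun i => ?_
  rcases i with i | j
  · fin_cases i <;>
      simp [reesWeight, reesMap, sumAlgEquiv_X_inl, monomial_add_single, ← X_pow_eq_monomial,
        -Finsupp.single_tsub, optionEquivLeft_X_none, optionEquivLeft_X_some, mul_assoc, mul_comm]
  · simp [reesMap, reesWeight, sumAlgEquiv_X_inr, ← X_pow_eq_monomial, optionEquivLeft_X_some]

theorem sumAlgEquiv_monomial_one (d : Fin 3 ⊕ Fin 2 →₀ ℕ) :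
    sumAlgEquiv k (Fin 3) (Fin 2) (monomial d 1) = X 0 ^ d (.inl 0) * X 1 ^ d (.inl 1) *
      X 2 ^ d (.inl 2) * C (X 0) ^ d (.inr 0) * C (X 1) ^ d (.inr 1) := by
  simp [monomial_eq, Finsupp.prod_fintype, Fintype.prod_sum_type, Fin.prod_univ_three,
    sumAlgEquiv_X_inl, sumAlgEquiv_X_inr, mul_assoc]

theorem linearCombination_reesWeight (d : Fin 3 ⊕ Fin 2 →₀ ℕ) :
    Finsupp.linearCombination ℕ (reesWeight p) d none = d (.inl 0) + d (.inl 1) + d (.inl 2) ∧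
    Finsupp.linearCombination ℕ (reesWeight p) d (some 0) =
      p * d (.inl 0) + 2 * d (.inl 2) + d (.inr 0) ∧
    Finsupp.linearCombination ℕ (reesWeight p) d (some 1) =
      p * d (.inl 1) + (p - 2) * d (.inl 2) + d (.inr 1) := by
  simp [Finsupp.linearCombination_apply, Finsupp.sum_fintype, Fintype.sum_sum_type,
    Fin.sum_univ_three, reesWeight, mul_comm]

variable {k p} {Q : Type*} [CommRing Q]

theorem span_reesGenerators_le_ker_iff (hpm : p = 2 * m + 1) (hm : 1 ≤ m)
    (f : MvPolynomial (Fin 3) (MvPolynomial (Fin 2) k) →+* Q) :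
    Ideal.span (reesGenerators k p) ≤ RingHom.ker f ↔
      ReesEquations p m (f (X 0)) (f (X 1)) (f (X 2)) (f (C (X 0))) (f (C (X 1))) := by
  rw [reesGenerators, show (p + 1) / 2 = m + 1 by omega, show (p - 1) / 2 = m by omega]
  simp only [Ideal.span_le, Set.union_subset_iff, Set.insert_subset_iff,
    Set.singleton_subset_iff, Set.image_subset_iff]
  simp only [Set.subset_def, Set.mem_preimage, Set.mem_Icc, SetLike.mem_coe, RingHom.mem_ker,
    map_sub, map_mul, map_pow, sub_eq_zero]
  constructor
  · rintro ⟨⟨hF₁, hG, hM, hP⟩, hF⟩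
    refine ⟨fun n hn hnm => ?_, hG, hM, hP⟩
    rcases hn.eq_or_lt with rfl | hn
    · simpa using hF₁
    · exact hF n ⟨hn, hnm⟩
  · rintro ⟨hF, hG, hM, hP⟩
    exact ⟨⟨by simpa using hF 1 le_rfl hm, hG, hM, hP⟩, fun n hn => hF n (by omega) hn.2⟩

theorem ker_reesMap_le_ker (hpm : p = 2 * m + 1) (hm : 1 ≤ m)
    (f : MvPolynomial (Fin 3) (MvPolynomial (Fin 2) k) →+* Q)
    (h : ReesEquations p m (f (X 0)) (f (X 1)) (f (X 2)) (f (C (X 0))) (f (C (X 1)))) :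
    RingHom.ker (reesMap k p) ≤ RingHom.ker f := by
  have hbin : Ideal.span {g | ∃ d d', Finsupp.linearCombination ℕ (reesWeight p) d =
      Finsupp.linearCombination ℕ (reesWeight p) d' ∧ g = monomial d (1 : k) - monomial d' 1} ≤
      RingHom.ker (f.comp (sumAlgEquiv k (Fin 3) (Fin 2)).toRingHom) := by
    rw [Ideal.span_le]
    rintro _ ⟨d, d', hd, rfl⟩
    obtain ⟨ht, ha, hb⟩ := linearCombination_reesWeight p d
    obtain ⟨ht', ha', hb'⟩ := linearCombination_reesWeight p d'
    rw [hd, ht'] at ht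
    rw [hd, ha'] at ha
    rw [hd, hb'] at hb
    rw [SetLike.mem_coe, RingHom.mem_ker, map_sub, sub_eq_zero]
    change f (sumAlgEquiv k _ _ _) = f (sumAlgEquiv k _ _ _)
    simp only [sumAlgEquiv_monomial_one, map_mul, map_pow]
    exact h.monomial_eq_of_weight_eq hpm hm ht.symm ha.symm
      (add_eq_add_of_weight_eq (by omega) ht.symm ha.symm hb.symm)
  intro g hg
  have hg' : (sumAlgEquiv k (Fin 3) (Fin 2)).symm g ∈
      RingHom.ker (aeval fun i => monomial (reesWeight p i) (1 : k)) := by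
    rw [RingHom.mem_ker, ← (optionEquivLeft k (Fin 2)).injective.eq_iff, map_zero,
      ← reesMap_sumAlgEquiv, AlgEquiv.apply_symm_apply]
    exact hg
  rw [ker_aeval_monomial_one] at hg'
  simpa using hbin hg'

theorem ker_reesMap (hpm : p = 2 * m + 1) (hm : 1 ≤ m) :
    RingHom.ker (reesMap k p) = Ideal.span (reesGenerators k p) := by
  apply le_antisymm
  · have hI := (span_reesGenerators_le_ker_iff (k := k) (Q := _ ⧸ Ideal.span (reesGenerators k p))
      hpm hm (Ideal.Quotient.mk _)).mp Ideal.mk_ker.ge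
    simpa only [Ideal.mk_ker] using ker_reesMap_le_ker hpm hm _ hI
  · rw [← RingHom.ker_coe_toRingHom, span_reesGenerators_le_ker_iff hpm hm]
    simpa [reesMap] using reesEquations_monomial hpm hm
      (Polynomial.C (X 0 : MvPolynomial (Fin 2) k)) (Polynomial.C (X 1)) Polynomial.X

end ReesMap

/-- For `A = k[a₁,a₂]`, `p ≥ 5` odd, `x₁ = a₁^p`, `x₂ = a₂^p`,
`y = a₁²a₂^{p-2}`, the kernel of `φ : A[X₁,X₂,Y] → A[t]`, `X₁ ↦ x₁t, X₂ ↦ x₂t, Y ↦ yt`,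
is generated by `F₁ = a₁^{p-2}Y − a₂^{p-2}X₁`, `G₁ = a₂²Y − a₁²X₂`,
`Fₙ = a₁^{p-2n}Yⁿ − a₂^{p-2n}X₁X₂^{n-1}` for `2 ≤ n ≤ (p-1)/2`,
`F_{(p+1)/2} = a₂Y^{(p+1)/2} − a₁X₁X₂^{(p-1)/2}`, and `F_p = Y^p − X₁²X₂^{p-2}`.
(Here `X₁ = X 0`, `X₂ = X 1`, `Y = X 2`.) -/
theorem stmt_12 {k : Type*} [Field k] (p : ℕ) (hp : 5 ≤ p) (hodd : Odd p) :
    let a₁ : MvPolynomial (Fin 2) k := MvPolynomial.X 0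
    let a₂ : MvPolynomial (Fin 2) k := MvPolynomial.X 1
    let φ : MvPolynomial (Fin 3) (MvPolynomial (Fin 2) k) →ₐ[MvPolynomial (Fin 2) k]
        Polynomial (MvPolynomial (Fin 2) k) :=
      MvPolynomial.aeval ![Polynomial.C (a₁ ^ p) * Polynomial.X,
        Polynomial.C (a₂ ^ p) * Polynomial.X,
        Polynomial.C (a₁ ^ 2 * a₂ ^ (p - 2)) * Polynomial.X]
    RingHom.ker φ = Ideal.span
      ({MvPolynomial.C (a₁ ^ (p - 2)) * MvPolynomial.X 2
          - MvPolynomial.C (a₂ ^ (p - 2)) * MvPolynomial.X 0,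
        MvPolynomial.C (a₂ ^ 2) * MvPolynomial.X 2
          - MvPolynomial.C (a₁ ^ 2) * MvPolynomial.X 1,
        MvPolynomial.C a₂ * MvPolynomial.X 2 ^ ((p + 1) / 2)
          - MvPolynomial.C a₁ * (MvPolynomial.X 0 * MvPolynomial.X 1 ^ ((p - 1) / 2)),
        MvPolynomial.X 2 ^ p - MvPolynomial.X 0 ^ 2 * MvPolynomial.X 1 ^ (p - 2)} ∪
        (fun n => MvPolynomial.C (a₁ ^ (p - 2 * n)) * MvPolynomial.X 2 ^ n
          - MvPolynomial.C (a₂ ^ (p - 2 * n))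
            * (MvPolynomial.X 0 * MvPolynomial.X 1 ^ (n - 1))) ''
          Set.Icc 2 ((p - 1) / 2)) := by
  obtain ⟨m, hpm⟩ := hodd
  exact ker_reesMap hpm (by omega)
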